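/- Let ℱ be a free filter on ℕ, F ∈ ℱ with ℕ \ F infinite, and λ an infinite cardinal. For each subset κ ⊆ λ, the set I_κ = (ℕ_{ℱ,max} × {0}) ∪ ((ℕ \ F) × κ) is an open-and-closed ideal of E = (ℕ_{ℱ,max} × {0}) ∪ ((ℕ \ F) × λ), and the Rees quotient E/I_κ with the quotient topology is a discrete topological semilattice that is not 𝓗-complete. -/

import Mathlib

open Topology Set

/-- A filter is free if the intersection of all its members is empty. -/
def FreeF (F : Filter ℕ) : Prop := ⋂₀ F.sets = ∅

/-- The topology on ℕ_ℱ = ℕ ∪ {ℱ} (modelled as `Option ℕ`, with `none` the point ℱ):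
all points of ℕ are isolated, and the sets F ∪ {ℱ}, F ∈ ℱ, form a neighbourhood base at ℱ. -/
def nfTop (F : Filter ℕ) : TopologicalSpace (Option ℕ) where
  IsOpen U := none ∈ U → {n : ℕ | some n ∈ U} ∈ F
  isOpen_univ := fun _ => by simp
  isOpen_inter := fun U V hU hV h => Filter.inter_mem (hU h.1) (hV h.2)
  isOpen_sUnion := fun S hS h => by
    obtain ⟨U, hUS, hnU⟩ := h
    exact Filter.mem_of_superset (hS U hUS hnU) fun n hn => ⟨U, hUS, hn⟩

/-- min on ℕ extended to ℕ_ℱ by min(n,ℱ) = n, min(ℱ,ℱ) = ℱ. -/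
def minOp : Option ℕ → Option ℕ → Option ℕ
  | none, y => y
  | some a, none => some a
  | some a, some b => some (min a b)

/-- max on ℕ extended to ℕ_ℱ by max(n,ℱ) = ℱ = max(ℱ,ℱ). -/
def maxOp : Option ℕ → Option ℕ → Option ℕ
  | none, _ => none
  | _, none => none
  | some a, some b => some (max a b)

/-- `X` with operation `op` is a (Hausdorff) topological semilattice. -/
structure IsTopSemilattice (X : Type*) [TopologicalSpace X] (op : X → X → X) : Prop where
  t2 : T2Space X
  comm : ∀ a b, op a b = op b a
  idem : ∀ a, op a a = a
  assoc : ∀ a b c, op (op a b) c = op a (op b c)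
  cont : Continuous fun p : X × X => op p.1 p.2

/-- 𝓗-completeness: the image under any topological embedding which is a semilattice
homomorphism into a Hausdorff topological semilattice is closed. -/
def HComplete (X : Type*) [TopologicalSpace X] (op : X → X → X) : Prop :=
  ∀ (Y : Type*) [TopologicalSpace Y] (opY : Y → Y → Y), IsTopSemilattice Y opY →
    ∀ f : X → Y, Topology.IsEmbedding f →
      (∀ a b, f (op a b) = opY (f a) (f b)) → IsClosed (Set.range f)

/-- 𝓐𝓗-completeness: the image under any continuous semilattice homomorphism
into a Hausdorff topological semilattice is closed. -/
def AHComplete (X : Type*) [TopologicalSpace X] (op : X → X → X) : Prop :=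
  ∀ (Y : Type*) [TopologicalSpace Y] (opY : Y → Y → Y), IsTopSemilattice Y opY →
    ∀ f : X → Y, Continuous f →
      (∀ a b, f (op a b) = opY (f a) (f b)) → IsClosed (Set.range f)

-- The semilattice operation of E_λ = {0} ∪ λ (modelled as `Option L`, `none` the zero):
-- x·y = x if x = y and x·y = 0 otherwise.
open Classical in
noncomputable def eOp {L : Type*} (x y : Option L) : Option L := if x = y then x else none

/-- The product topology on ℕ_{ℱ,max} × E_λ (E_λ discrete). -/
def prodTopL (F : Filter ℕ) (L : Type*) : TopologicalSpace (Option ℕ × Option L) :=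
  @instTopologicalSpaceProd _ _ (nfTop F) ⊥

/-- The coordinatewise operation on ℕ_{ℱ,max} × E_λ. -/
noncomputable def pOpL {L : Type*} (p q : Option ℕ × Option L) : Option ℕ × Option L :=
  (maxOp p.1 q.1, eOp p.2 q.2)

/-- The subset E = (ℕ_{ℱ,max} × {0}) ∪ ((ℕ \ F) × λ) of ℕ_{ℱ,max} × E_λ. -/
def EsetL (Fs : Set ℕ) (L : Type*) : Set (Option ℕ × Option L) :=
  (Set.univ ×ˢ {none}) ∪ ((some '' Fsᶜ) ×ˢ (some '' Set.univ))

/-- The ideal I_κ = (ℕ_{ℱ,max} × {0}) ∪ ((ℕ \ F) × κ) for κ ⊆ λ. -/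
def IsetL (Fs : Set ℕ) {L : Type*} (κ : Set L) : Set (Option ℕ × Option L) :=
  (Set.univ ×ˢ {none}) ∪ ((some '' Fsᶜ) ×ˢ (some '' κ))

/-- The subspace topology on E ⊆ ℕ_{ℱ,max} × E_λ. -/
def subTopL (F : Filter ℕ) (Fs : Set ℕ) (L : Type*) : TopologicalSpace (EsetL Fs L) :=
  @instTopologicalSpaceSubtype _ _ (prodTopL F L)

/-- The Rees congruence on E identifying all points of the ideal I_κ. -/
def reesSetoidL (Fs : Set ℕ) {L : Type*} (κ : Set L) : Setoid (EsetL Fs L) where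
  r a b := a = b ∨ ((a : Option ℕ × Option L) ∈ IsetL Fs κ ∧
    (b : Option ℕ × Option L) ∈ IsetL Fs κ)
  iseqv := by
    refine ⟨fun _ => Or.inl rfl, ?_, ?_⟩
    · rintro a b (rfl | h)
      · exact Or.inl rfl
      · exact Or.inr ⟨h.2, h.1⟩
    · rintro a b c (rfl | h1) h2
      · exact h2
      · rcases h2 with rfl | h2
        · exact Or.inr h1
        · exact Or.inr ⟨h1.1, h2.2⟩

/-- The quotient topology on the Rees quotient E/I_κ. -/
def qTopL (F : Filter ℕ) (Fs : Set ℕ) {L : Type*} (κ : Set L) :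
    TopologicalSpace (Quotient (reesSetoidL Fs κ)) :=
  (subTopL F Fs L).coinduced (Quotient.mk (reesSetoidL Fs κ))

/-!
Inside `E` a point lies in `I_κ` exactly when its `E_λ`-coordinate is `0` or lies in `κ`, so `I_κ`
is the preimage of a subset of the discrete space `E_λ` and is clopen. Every other point of `E` is
some `(n, k)` with `n ∈ ℕ` isolated, so the Rees quotient `E/I_κ` is discrete.

To see that `E/I_κ` is not `𝓗`-complete, embed it into the Rees quotient `Y` of `ℕ∞ × E_λ` by the
clopen ideal `ℕ∞ × {0}` (`ℕ∞` with its order topology, in which `max` is continuous): the zero goes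
to `(⊤, 0)` and `(n, k)` to itself. For `k ∉ κ` the points `(n, k)`, `n ∈ ℕ \ F`, lie in the image
and converge to `(⊤, k)`, which does not, so the image is not closed in `Y`.
-/

section HComplete

universe u v w

theorem isOpenEmbedding_of_discreteTopology {X Y : Type*} [TopologicalSpace X]
    [DiscreteTopology X] [TopologicalSpace Y] {f : X → Y} (hf : Function.Injective f)
    (h : ∀ x, IsOpen {f x}) : IsOpenEmbedding f := by
  refine .of_continuous_injective_isOpenMap continuous_of_discreteTopology hf fun U _ => ?_
  rw [← U.biUnion_of_singleton, Set.image_iUnion₂]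
  simpa using isOpen_biUnion fun x _ => h x

theorem IsTopSemilattice.ulift {Y : Type v} [TopologicalSpace Y] {op : Y → Y → Y}
    (h : IsTopSemilattice Y op) :
    IsTopSemilattice (ULift.{w} Y) fun a b => ULift.up (op a.down b.down) where
  t2 := have := h.t2; Homeomorph.ulift.isEmbedding.t2Space
  comm _ _ := congrArg ULift.up (h.comm _ _)
  idem _ := congrArg ULift.up (h.idem _)
  assoc _ _ _ := congrArg ULift.up (h.assoc _ _ _)
  cont := continuous_uliftUp.comp (h.cont.comp (continuous_uliftDown.prodMap continuous_uliftDown))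

theorem not_hComplete_of_isEmbedding {X : Type u} [TopologicalSpace X] {op : X → X → X}
    {Y : Type v} [TopologicalSpace Y] {opY : Y → Y → Y} (hY : IsTopSemilattice Y opY)
    {f : X → Y} (hf : IsEmbedding f) (hhom : ∀ a b, f (op a b) = opY (f a) (f b))
    (hrange : ¬ IsClosed (Set.range f)) : ¬ HComplete.{u, max v w} X op := by
  intro hX
  have hclosed := hX (ULift.{w} Y) _ hY.ulift (Homeomorph.ulift.symm ∘ f)
    (Homeomorph.ulift.symm.isEmbedding.comp hf) fun a b => congrArg ULift.up (hhom a b)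
  rw [Set.range_comp, Homeomorph.isClosed_image] at hclosed
  exact hrange hclosed

end HComplete

section Algebra

variable {L : Type*}

theorem maxOp_comm (a b : Option ℕ) : maxOp a b = maxOp b a := by
  cases a <;> cases b <;> simp [maxOp, Nat.max_comm]

theorem maxOp_assoc (a b c : Option ℕ) : maxOp (maxOp a b) c = maxOp a (maxOp b c) := by
  cases a <;> cases b <;> cases c <;> simp [maxOp, Nat.max_assoc]

theorem maxOp_idem (a : Option ℕ) : maxOp a a = a := by
  cases a <;> simp [maxOp]

@[simp] theorem eOp_none_left (y : Option L) : eOp none y = none := by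
  unfold eOp; split_ifs <;> simp_all

@[simp] theorem eOp_none_right (x : Option L) : eOp x none = none := by
  unfold eOp; split_ifs <;> simp_all

@[simp] theorem eOp_self (x : Option L) : eOp x x = x := if_pos rfl

theorem eOp_of_ne {x y : Option L} (h : x ≠ y) : eOp x y = none := if_neg h

theorem eOp_comm (x y : Option L) : eOp x y = eOp y x := by
  unfold eOp; split_ifs <;> simp_all

theorem eOp_assoc (x y z : Option L) : eOp (eOp x y) z = eOp x (eOp y z) := by
  by_cases hxy : x = y
  · subst hxy
    by_cases hxz : x = z
    · subst hxz; simp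
    · simp [eOp_of_ne hxz]
  · by_cases hyz : y = z
    · subst hyz; simp [eOp_of_ne hxy]
    · simp [eOp_of_ne hxy, eOp_of_ne hyz]

theorem pOpL_comm (p q : Option ℕ × Option L) : pOpL p q = pOpL q p :=
  Prod.ext (maxOp_comm _ _) (eOp_comm _ _)

theorem pOpL_assoc (p q r : Option ℕ × Option L) :
    pOpL (pOpL p q) r = pOpL p (pOpL q r) :=
  Prod.ext (maxOp_assoc _ _ _) (eOp_assoc _ _ _)

theorem pOpL_idem (p : Option ℕ × Option L) : pOpL p p = p :=
  Prod.ext (maxOp_idem _) (eOp_self _)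

end Algebra

section Ideal

variable {Fs : Set ℕ} {L : Type*} {κ : Set L} {p q : Option ℕ × Option L}

theorem mem_EsetL_iff : p ∈ EsetL Fs L ↔ p.2 = none ∨ ∃ n ∉ Fs, ∃ k, p = (some n, some k) := by
  constructor
  · rintro (⟨-, h⟩ | ⟨⟨n, hn, h1⟩, ⟨k, -, h2⟩⟩)
    exacts [Or.inl h, Or.inr ⟨n, hn, k, Prod.ext h1.symm h2.symm⟩]
  · rintro (h | ⟨n, hn, k, rfl⟩)
    exacts [Or.inl ⟨trivial, h⟩, Or.inr ⟨⟨n, hn, rfl⟩, ⟨k, trivial, rfl⟩⟩]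

theorem mem_IsetL_iff :
    p ∈ IsetL Fs κ ↔ p.2 = none ∨ ∃ n ∉ Fs, ∃ k ∈ κ, p = (some n, some k) := by
  constructor
  · rintro (⟨-, h⟩ | ⟨⟨n, hn, h1⟩, ⟨k, hk, h2⟩⟩)
    exacts [Or.inl h, Or.inr ⟨n, hn, k, hk, Prod.ext h1.symm h2.symm⟩]
  · rintro (h | ⟨n, hn, k, hk, rfl⟩)
    exacts [Or.inl ⟨trivial, h⟩, Or.inr ⟨⟨n, hn, rfl⟩, ⟨k, hk, rfl⟩⟩]

theorem IsetL_subset_EsetL : IsetL Fs κ ⊆ EsetL Fs L := fun p hp => by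
  rcases mem_IsetL_iff.1 hp with h | ⟨n, hn, k, -, rfl⟩
  exacts [mem_EsetL_iff.2 (Or.inl h), mem_EsetL_iff.2 (Or.inr ⟨n, hn, k, rfl⟩)]

theorem mem_IsetL_iff_of_mem_EsetL (hp : p ∈ EsetL Fs L) :
    p ∈ IsetL Fs κ ↔ ∀ k, p.2 = some k → k ∈ κ := by
  rcases mem_EsetL_iff.1 hp with h | ⟨n, hn, k, rfl⟩
  · simp [mem_IsetL_iff, h]
  · simp [mem_IsetL_iff, hn]

theorem notMem_IsetL_iff_of_mem_EsetL (hp : p ∈ EsetL Fs L) :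
    p ∉ IsetL Fs κ ↔ ∃ n ∉ Fs, ∃ k ∉ κ, p = (some n, some k) := by
  rcases mem_EsetL_iff.1 hp with h | ⟨n, hn, k, rfl⟩
  · simp [mem_IsetL_iff, h, Prod.ext_iff]
  · simp [mem_IsetL_iff, hn]

theorem pOpL_mem_EsetL (hp : p ∈ EsetL Fs L) (hq : q ∈ EsetL Fs L) : pOpL p q ∈ EsetL Fs L := by
  rcases mem_EsetL_iff.1 hp with hp | ⟨n, hn, k, rfl⟩
  · exact mem_EsetL_iff.2 (Or.inl (by simp [pOpL, hp]))
  rcases mem_EsetL_iff.1 hq with hq | ⟨m, hm, k', rfl⟩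
  · exact mem_EsetL_iff.2 (Or.inl (by simp [pOpL, hq]))
  by_cases hk : k = k'
  · subst hk
    refine mem_EsetL_iff.2 (Or.inr ⟨max n m, ?_, k, by simp [pOpL, maxOp]⟩)
    rcases max_choice n m with h | h <;> rw [h] <;> assumption
  · exact mem_EsetL_iff.2 (Or.inl (eOp_of_ne (by simpa using hk)))

theorem pOpL_mem_IsetL (hp : p ∈ EsetL Fs L) (hq : q ∈ IsetL Fs κ) : pOpL p q ∈ IsetL Fs κ := by
  refine (mem_IsetL_iff_of_mem_EsetL (pOpL_mem_EsetL hp (IsetL_subset_EsetL hq))).2 fun k hk => ?_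
  have hpq : p.2 = q.2 := by
    by_contra h
    simp [pOpL, eOp_of_ne h] at hk
  have hq2 : q.2 = some k := by simpa [pOpL, hpq] using hk
  exact (mem_IsetL_iff_of_mem_EsetL (IsetL_subset_EsetL hq)).1 hq k hq2

end Ideal

-- The topology that `prodTopL` puts on `E_λ`.
abbrev optionDiscreteTopology (L : Type*) : TopologicalSpace (Option L) := ⊥

attribute [local instance] optionDiscreteTopology

theorem optionDiscreteTopology_discrete (L : Type*) : DiscreteTopology (Option L) := ⟨rfl⟩

attribute [local instance] optionDiscreteTopology_discrete

section ReesQuotient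

variable (F : Filter ℕ) (Fs : Set ℕ) {L : Type*} (κ : Set L)

theorem nfTop_isOpen_singleton_some (n : ℕ) : @IsOpen _ (nfTop F) {some n} :=
  fun h => absurd h (by simp)

theorem continuous_snd_EsetL : @Continuous _ _ (subTopL F Fs L) _ fun x : EsetL Fs L => x.1.2 := by
  let _ := nfTop F
  exact continuous_snd.comp continuous_subtype_val

theorem isOpen_singleton_EsetL {x : EsetL Fs L} {n : ℕ} (hx : x.1.1 = some n) :
    @IsOpen _ (subTopL F Fs L) {x} := by
  let _ := nfTop F
  have hsingleton : {x} = Subtype.val ⁻¹' ({some n} ×ˢ {x.1.2}) := by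
    ext y
    simp [Subtype.ext_iff, Prod.ext_iff, hx]
  rw [hsingleton]
  exact ((nfTop_isOpen_singleton_some F n).prod (isOpen_discrete _)).preimage continuous_subtype_val

theorem isClopen_IsetL : @IsClopen _ (subTopL F Fs L) {x : EsetL Fs L | x.1 ∈ IsetL Fs κ} := by
  let _ := subTopL F Fs L
  have hset : {x : EsetL Fs L | x.1 ∈ IsetL Fs κ} =
      (fun x : EsetL Fs L => x.1.2) ⁻¹' {o | ∀ k, o = some k → k ∈ κ} :=
    Set.ext fun x => mem_IsetL_iff_of_mem_EsetL x.2
  rw [hset]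
  exact (isClopen_discrete _).preimage (continuous_snd_EsetL F Fs)

variable {Fs κ}

theorem reesSetoidL_mk_eq_iff {a b : EsetL Fs L} :
    Quotient.mk (reesSetoidL Fs κ) a = Quotient.mk _ b ↔
      a = b ∨ (a.1 ∈ IsetL Fs κ ∧ b.1 ∈ IsetL Fs κ) :=
  Quotient.eq

theorem discreteTopology_qTopL : @DiscreteTopology _ (qTopL F Fs κ) := by
  let _ := subTopL F Fs L
  let _ := qTopL F Fs κ
  refine discreteTopology_iff_isOpen_singleton.2 fun x => ?_
  obtain ⟨a, rfl⟩ := Quotient.exists_rep x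
  refine isOpen_coinduced.2 ?_
  by_cases ha : a.1 ∈ IsetL Fs κ
  · have hfiber :
        Quotient.mk (reesSetoidL Fs κ) ⁻¹' {⟦a⟧} = {x : EsetL Fs L | x.1 ∈ IsetL Fs κ} := by
      ext b
      simp only [Set.mem_preimage, Set.mem_singleton_iff, reesSetoidL_mk_eq_iff, Set.mem_ofPred_eq]
      exact ⟨by rintro (rfl | ⟨hb, -⟩) <;> assumption, fun hb => Or.inr ⟨hb, ha⟩⟩
    rw [hfiber]
    exact (isClopen_IsetL F Fs κ).isOpen
  · obtain ⟨n, -, k, -, hak⟩ := (notMem_IsetL_iff_of_mem_EsetL a.2).1 ha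
    have hfiber : Quotient.mk (reesSetoidL Fs κ) ⁻¹' {⟦a⟧} = {a} := by
      ext b
      simp [reesSetoidL_mk_eq_iff, ha]
    rw [hfiber]
    exact isOpen_singleton_EsetL F Fs (congrArg Prod.fst hak)

variable (Fs κ)

noncomputable def mulEsetL (a b : EsetL Fs L) : EsetL Fs L :=
  ⟨pOpL a b, pOpL_mem_EsetL a.2 b.2⟩

noncomputable def reesMulL :
    Quotient (reesSetoidL Fs κ) → Quotient (reesSetoidL Fs κ) → Quotient (reesSetoidL Fs κ) :=
  Quotient.map₂ (mulEsetL Fs) fun a₁ a₂ ha b₁ b₂ hb => by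
    rcases ha with rfl | ⟨ha₁, ha₂⟩
    · rcases hb with rfl | ⟨hb₁, hb₂⟩
      · exact Or.inl rfl
      · exact Or.inr ⟨pOpL_mem_IsetL a₁.2 hb₁, pOpL_mem_IsetL a₁.2 hb₂⟩
    · refine Or.inr ⟨?_, ?_⟩ <;> simp only [mulEsetL] <;> rw [pOpL_comm]
      exacts [pOpL_mem_IsetL b₁.2 ha₁, pOpL_mem_IsetL b₂.2 ha₂]

theorem isTopSemilattice_reesMulL : @IsTopSemilattice _ (qTopL F Fs κ) (reesMulL Fs κ) := by
  let _ := qTopL F Fs κ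
  have := discreteTopology_qTopL F (Fs := Fs) (κ := κ)
  refine ⟨inferInstance, ?_, ?_, ?_, continuous_of_discreteTopology⟩
  · rintro ⟨a⟩ ⟨b⟩
    exact congrArg (Quotient.mk _) (Subtype.ext (pOpL_comm a.1 b.1))
  · rintro ⟨a⟩
    exact congrArg (Quotient.mk _) (Subtype.ext (pOpL_idem a.1))
  · rintro ⟨a⟩ ⟨b⟩ ⟨c⟩
    exact congrArg (Quotient.mk _) (Subtype.ext (pOpL_assoc a.1 b.1 c.1))

end ReesQuotient

section ReesENat

variable {L : Type*}

/- The Rees quotient of `ℕ∞ × E_λ` by its clopen ideal `ℕ∞ × {0}`, realised on representatives: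
`(⊤, none)` stands for the collapsed ideal. -/
def reesENat (L : Type*) : Set (ℕ∞ × Option L) := {p | p.2 = none → p.1 = ⊤}

open Classical in
noncomputable def reesENatOp (p q : ℕ∞ × Option L) : ℕ∞ × Option L :=
  (if eOp p.2 q.2 = none then ⊤ else max p.1 q.1, eOp p.2 q.2)

theorem reesENatOp_mem (p q : ℕ∞ × Option L) : reesENatOp p q ∈ reesENat L := by
  intro h
  simp_all [reesENatOp]

theorem reesENatOp_comm (p q : ℕ∞ × Option L) : reesENatOp p q = reesENatOp q p := by
  simp [reesENatOp, eOp_comm p.2, max_comm]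

theorem reesENatOp_assoc (p q r : ℕ∞ × Option L) :
    reesENatOp (reesENatOp p q) r = reesENatOp p (reesENatOp q r) := by
  refine Prod.ext ?_ (eOp_assoc _ _ _)
  simp only [reesENatOp, eOp_assoc]
  by_cases hpqr : eOp p.2 (eOp q.2 r.2) = none
  · simp [hpqr]
  · have hqr : eOp q.2 r.2 ≠ none := fun h => hpqr (by simp [h])
    have hpq : eOp p.2 q.2 ≠ none := fun h => hpqr (by simp [← eOp_assoc, h])
    simp [hpqr, hqr, hpq, max_assoc]

theorem reesENatOp_self {p : ℕ∞ × Option L} (hp : p ∈ reesENat L) : reesENatOp p p = p := by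
  by_cases h : p.2 = none
  · exact Prod.ext (by simp [reesENatOp, h, hp h]) (by simp [reesENatOp])
  · exact Prod.ext (by simp [reesENatOp, h]) (by simp [reesENatOp])

theorem continuous_reesENatOp :
    Continuous fun pq : (ℕ∞ × Option L) × (ℕ∞ × Option L) => reesENatOp pq.1 pq.2 := by
  have he : Continuous fun pq : (ℕ∞ × Option L) × (ℕ∞ × Option L) => eOp pq.1.2 pq.2.2 :=
    (continuous_of_discreteTopology (f := fun xy : Option L × Option L => eOp xy.1 xy.2)).comp
      ((continuous_snd.comp continuous_fst).prodMk (continuous_snd.comp continuous_snd))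
  refine Continuous.prodMk (continuous_const.if (fun pq hpq => ?_) (by fun_prop)) he
  have hclopen : IsClopen {pq : (ℕ∞ × Option L) × (ℕ∞ × Option L) | eOp pq.1.2 pq.2.2 = none} :=
    (isClopen_discrete {none}).preimage he
  rw [hclopen.frontier_eq] at hpq
  exact hpq.elim

noncomputable def reesENatMul (a b : reesENat L) : reesENat L :=
  ⟨reesENatOp a.1 b.1, reesENatOp_mem a.1 b.1⟩

theorem isTopSemilattice_reesENat : IsTopSemilattice (reesENat L) reesENatMul where
  t2 := inferInstance
  comm a b := Subtype.ext (reesENatOp_comm a.1 b.1)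
  idem a := Subtype.ext (reesENatOp_self a.2)
  assoc a b c := Subtype.ext (reesENatOp_assoc a.1 b.1 c.1)
  cont := .subtype_mk
    (continuous_reesENatOp.comp (continuous_subtype_val.prodMap continuous_subtype_val)) _

theorem isOpen_singleton_reesENat {a : reesENat L} (ha : a.1.1 ≠ ⊤ ∨ a.1.2 = none) :
    IsOpen {a} := by
  rcases ha with ha | ha
  · have hsingleton : {a} = Subtype.val ⁻¹' ({a.1.1} ×ˢ {a.1.2}) := by
      ext b
      simp [Subtype.ext_iff, Prod.ext_iff]
    rw [hsingleton]
    exact ((ENat.isOpen_singleton ha).prod (isOpen_discrete _)).preimage continuous_subtype_val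
  · have hsingleton : {a} = Subtype.val ⁻¹' (Set.univ ×ˢ {none}) := by
      ext b
      simp only [Set.mem_singleton_iff, Set.mem_preimage, Set.mem_prod, Set.mem_univ, true_and]
      refine ⟨fun h => h ▸ ha, fun hb => Subtype.ext (Prod.ext ?_ (hb.trans ha.symm))⟩
      rw [b.2 hb, a.2 ha]
    rw [hsingleton]
    exact (isOpen_univ.prod (isOpen_discrete _)).preimage continuous_subtype_val

theorem not_isClosed_reesENat_of_infinite {R : Set (reesENat L)} {N : Set ℕ} (hN : N.Infinite)
    {k : L} (hR : ∀ n ∈ N, ∃ r ∈ R, r.1 = ((n : ℕ∞), some k))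
    (htop : ∀ r ∈ R, r.1 ≠ (⊤, some k)) : ¬ IsClosed R := by
  intro hR_closed
  let u : ℕ → reesENat L := fun n => ⟨((n : ℕ∞), some k), fun h => absurd h (Option.some_ne_none k)⟩
  have hfreq : ∃ᶠ n in Filter.atTop, u n ∈ R := by
    refine (Nat.frequently_atTop_iff_infinite.2 hN).mono fun n hn => ?_
    obtain ⟨r, hr, hru⟩ := hR n hn
    exact (Subtype.ext hru : r = u n) ▸ hr
  have hlim : Filter.Tendsto u Filter.atTop (𝓝 ⟨(⊤, some k), fun _ => rfl⟩) :=
    tendsto_subtype_rng.2 (ENat.tendsto_natCast_nhds_top.prodMk_nhds tendsto_const_nhds)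
  exact htop _ (hR_closed.mem_of_frequently_of_tendsto hfreq hlim) rfl

end ReesENat

section Embedding

variable {Fs : Set ℕ} {L : Type*} (κ : Set L)

open Classical in
noncomputable def toReesENat : Option ℕ × Option L → ℕ∞ × Option L
  | (some n, some k) => if k ∈ κ then (⊤, none) else (n, some k)
  | _ => (⊤, none)

theorem toReesENat_mem (p : Option ℕ × Option L) : toReesENat κ p ∈ reesENat L := by
  unfold toReesENat
  split
  · split_ifs <;> simp [reesENat]
  · simp [reesENat]

theorem toReesENat_pOpL (p q : Option ℕ × Option L) :
    toReesENat κ (pOpL p q) = reesENatOp (toReesENat κ p) (toReesENat κ q) := by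
  rcases p with ⟨_ | n, _ | k⟩ <;> rcases q with ⟨_ | m, _ | k'⟩ <;>
    simp [toReesENat, pOpL, maxOp, reesENatOp]
  by_cases hkk : k = k'
  · subst hkk
    by_cases hk : k ∈ κ <;> simp [hk, Nat.mono_cast.map_max]
  · have hne : eOp (some k) (some k') = none := eOp_of_ne (by simpa using hkk)
    by_cases hk : k ∈ κ <;> by_cases hk' : k' ∈ κ <;> simp [hne, hk, hk']

variable {κ}

theorem toReesENat_eq_top_none_iff {p : Option ℕ × Option L} (hp : p ∈ EsetL Fs L) :
    toReesENat κ p = (⊤, none) ↔ p ∈ IsetL Fs κ := by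
  rcases mem_EsetL_iff.1 hp with h | ⟨n, hn, k, rfl⟩
  · obtain ⟨a, b⟩ := p
    subst h
    cases a <;> simp [toReesENat, mem_IsetL_iff]
  · by_cases hk : k ∈ κ <;> simp [toReesENat, mem_IsetL_iff, hn, hk]

theorem toReesENat_of_notMem {n : ℕ} {k : L} (hk : k ∉ κ) :
    toReesENat κ (some n, some k) = ((n : ℕ∞), some k) := by
  simp [toReesENat, hk]

theorem toReesENat_fst_ne_top_or_snd_eq_none {p : Option ℕ × Option L} (hp : p ∈ EsetL Fs L) :
    (toReesENat κ p).1 ≠ ⊤ ∨ (toReesENat κ p).2 = none := by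
  by_cases hI : p ∈ IsetL Fs κ
  · simp [(toReesENat_eq_top_none_iff hp).2 hI]
  · obtain ⟨n, -, k, hk, rfl⟩ := (notMem_IsetL_iff_of_mem_EsetL hp).1 hI
    simp [toReesENat_of_notMem hk]

variable (Fs κ)

noncomputable def reesQuotientToENat : Quotient (reesSetoidL Fs κ) → reesENat L :=
  Quotient.lift (fun a => ⟨toReesENat κ a.1, toReesENat_mem κ a.1⟩) fun a b hab => by
    rcases hab with rfl | ⟨ha, hb⟩
    · rfl
    · exact Subtype.ext (((toReesENat_eq_top_none_iff a.2).2 ha).trans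
        ((toReesENat_eq_top_none_iff b.2).2 hb).symm)

theorem reesQuotientToENat_reesMulL (x y : Quotient (reesSetoidL Fs κ)) :
    reesQuotientToENat Fs κ (reesMulL Fs κ x y) =
      reesENatMul (reesQuotientToENat Fs κ x) (reesQuotientToENat Fs κ y) := by
  induction x, y using Quotient.inductionOn₂ with
  | h a b => exact Subtype.ext (toReesENat_pOpL κ a.1 b.1)

theorem reesQuotientToENat_injective : Function.Injective (reesQuotientToENat Fs κ) := by
  rintro ⟨a⟩ ⟨b⟩ hab
  replace hab : toReesENat κ a.1 = toReesENat κ b.1 := congrArg Subtype.val hab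
  have hI : a.1 ∈ IsetL Fs κ ↔ b.1 ∈ IsetL Fs κ := by
    rw [← toReesENat_eq_top_none_iff a.2, ← toReesENat_eq_top_none_iff b.2, hab]
  refine reesSetoidL_mk_eq_iff.2 ?_
  by_cases ha : a.1 ∈ IsetL Fs κ
  · exact Or.inr ⟨ha, hI.1 ha⟩
  · obtain ⟨n, -, k, hk, hna⟩ := (notMem_IsetL_iff_of_mem_EsetL a.2).1 ha
    obtain ⟨m, -, k', hk', hmb⟩ := (notMem_IsetL_iff_of_mem_EsetL b.2).1 (hI.not.1 ha)
    rw [hna, hmb, toReesENat_of_notMem hk, toReesENat_of_notMem hk'] at hab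
    simp only [Prod.mk.injEq, Nat.cast_inj, Option.some.injEq] at hab
    exact Or.inl (Subtype.ext (by rw [hna, hmb, hab.1, hab.2]))

theorem isEmbedding_reesQuotientToENat (F : Filter ℕ) :
    @IsEmbedding _ _ (qTopL F Fs κ) _ (reesQuotientToENat Fs κ) := by
  let _ := qTopL F Fs κ
  have := discreteTopology_qTopL F (Fs := Fs) (κ := κ)
  refine (isOpenEmbedding_of_discreteTopology (reesQuotientToENat_injective Fs κ) ?_).isEmbedding
  rintro ⟨a⟩
  exact isOpen_singleton_reesENat (toReesENat_fst_ne_top_or_snd_eq_none a.2)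

theorem not_isClosed_range_reesQuotientToENat (hinf : Fsᶜ.Infinite) (hκ : κ ≠ Set.univ) :
    ¬ IsClosed (Set.range (reesQuotientToENat Fs κ)) := by
  obtain ⟨k, hk⟩ := Set.ne_univ_iff_exists_notMem κ |>.1 hκ
  refine not_isClosed_reesENat_of_infinite hinf (k := k) (fun n hn => ?_) ?_
  · have ha : ((some n, some k) : Option ℕ × Option L) ∈ EsetL Fs L :=
      mem_EsetL_iff.2 (Or.inr ⟨n, hn, k, rfl⟩)
    exact ⟨_, ⟨⟦⟨_, ha⟩⟧, rfl⟩, toReesENat_of_notMem hk⟩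
  · rintro _ ⟨⟨a⟩, rfl⟩ htop
    rcases toReesENat_fst_ne_top_or_snd_eq_none (κ := κ) a.2 with h | h
    · exact h (congrArg Prod.fst htop)
    · exact Option.some_ne_none k ((congrArg Prod.snd htop).symm.trans h)

end Embedding

theorem IsetL_clopen_ideal_quotient_not_hComplete_general (F : Filter ℕ)
    (Fs : Set ℕ) (hinf : Fsᶜ.Infinite) (L : Type)
    (κ : Set L) (hκ : κ ≠ Set.univ)
    (hsub : ∀ p ∈ EsetL Fs L, ∀ q ∈ EsetL Fs L, pOpL p q ∈ EsetL Fs L) :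
    (∀ p ∈ EsetL Fs L, ∀ q ∈ IsetL Fs κ, pOpL p q ∈ IsetL Fs κ) ∧
    @IsClopen (EsetL Fs L) (subTopL F Fs L)
      {x : EsetL Fs L | (x : Option ℕ × Option L) ∈ IsetL Fs κ} ∧
    ∃ opQ : Quotient (reesSetoidL Fs κ) → Quotient (reesSetoidL Fs κ) →
        Quotient (reesSetoidL Fs κ),
      (∀ a b : EsetL Fs L,
        opQ (Quotient.mk (reesSetoidL Fs κ) a) (Quotient.mk (reesSetoidL Fs κ) b) =
          Quotient.mk (reesSetoidL Fs κ) ⟨pOpL a.1 b.1, hsub a.1 a.2 b.1 b.2⟩) ∧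
      @DiscreteTopology _ (qTopL F Fs κ) ∧
      @IsTopSemilattice _ (qTopL F Fs κ) opQ ∧
      ¬ @HComplete _ (qTopL F Fs κ) opQ := by
  refine ⟨fun p hp q hq => pOpL_mem_IsetL hp hq, isClopen_IsetL F Fs κ, reesMulL Fs κ,
    fun _ _ => rfl, discreteTopology_qTopL F, isTopSemilattice_reesMulL F Fs κ, ?_⟩
  let _ := qTopL F Fs κ
  exact not_hComplete_of_isEmbedding isTopSemilattice_reesENat
    (isEmbedding_reesQuotientToENat Fs κ F) (reesQuotientToENat_reesMulL Fs κ)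
    (not_isClosed_range_reesQuotientToENat Fs κ hinf hκ)

/-- for each proper subset κ ⊂ λ, I_κ = (ℕ_{ℱ,max} × {0}) ∪ ((ℕ \ F) × κ)
is an open-and-closed ideal of E = (ℕ_{ℱ,max} × {0}) ∪ ((ℕ \ F) × λ), and the Rees
quotient E/I_κ with the quotient topology is a discrete topological semilattice
which is not 𝓗-complete. -/
theorem IsetL_clopen_ideal_quotient_not_hComplete (F : Filter ℕ) (hF : FreeF F)
    (Fs : Set ℕ) (hFs : Fs ∈ F) (hinf : Fsᶜ.Infinite) (L : Type) [Infinite L]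
    (κ : Set L) (hκ : κ ≠ Set.univ)
    (hsub : ∀ p ∈ EsetL Fs L, ∀ q ∈ EsetL Fs L, pOpL p q ∈ EsetL Fs L) :
    (∀ p ∈ EsetL Fs L, ∀ q ∈ IsetL Fs κ, pOpL p q ∈ IsetL Fs κ) ∧
    @IsClopen (EsetL Fs L) (subTopL F Fs L)
      {x : EsetL Fs L | (x : Option ℕ × Option L) ∈ IsetL Fs κ} ∧
    ∃ opQ : Quotient (reesSetoidL Fs κ) → Quotient (reesSetoidL Fs κ) →
        Quotient (reesSetoidL Fs κ),
      (∀ a b : EsetL Fs L,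
        opQ (Quotient.mk (reesSetoidL Fs κ) a) (Quotient.mk (reesSetoidL Fs κ) b) =
          Quotient.mk (reesSetoidL Fs κ) ⟨pOpL a.1 b.1, hsub a.1 a.2 b.1 b.2⟩) ∧
      @DiscreteTopology _ (qTopL F Fs κ) ∧
      @IsTopSemilattice _ (qTopL F Fs κ) opQ ∧
      ¬ @HComplete _ (qTopL F Fs κ) opQ :=
  IsetL_clopen_ideal_quotient_not_hComplete_general F Fs hinf L κ hκ hsub
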